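/- If Z is a random variable with E[exp(t(Z/σ)²)] ≤ c for some t ∈ (0, T] and constant c, and Y = θ + Z, then for the logistic weight ϕ defined by logit(ϕ) = logit(λ) + ½log(γ/(α+γ)) + (α/(2σ²))Y² with α ≤ 2t, one has, when θ = 0: E[ϕ] ≤ c·λ/(1−λ)·(γ/(α+γ))^{1/2}; in particular E[ϕ] = O(λ) as λ → 0. -/

import Mathlib

open MeasureTheory ProbabilityTheory Real

/-! The logistic weight is dominated by its odds, `ϕ ≤ exp (logit ϕ)`, and the odds factor as
`λ/(1-λ) · √(γ/(α+γ)) · exp ((α/2)(Z/σ)²)`; since `α/2 ≤ t`, the last factor is dominated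
by `exp (t (Z/σ)²)`, whose expectation is at most `c`. -/

lemma exp_div_one_add_exp_le_exp (x : ℝ) : exp x / (1 + exp x) ≤ exp x :=
  div_le_self (exp_nonneg x) (le_add_of_nonneg_right (exp_nonneg x))

lemma exp_half_mul_log {u : ℝ} (hu : 0 < u) : exp ((1 / 2) * log u) = √u := by
  rw [sqrt_eq_rpow, rpow_def_of_pos hu, mul_comm]

lemma exp_log_add_half_mul_log_add {L u : ℝ} (hL : 0 < L) (hu : 0 < u) (s : ℝ) :
    exp (log L + (1 / 2) * log u + s) = L * √u * exp s := by
  rw [exp_add, exp_add, exp_log hL, exp_half_mul_log hu]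

lemma div_two_mul_sq_mul_sq_le {α t : ℝ} (hαt : α ≤ 2 * t) (σ z : ℝ) :
    α / (2 * σ ^ 2) * z ^ 2 ≤ t * (z / σ) ^ 2 := by
  rw [show α / (2 * σ ^ 2) * z ^ 2 = α / 2 * (z / σ) ^ 2 by ring]
  gcongr
  linarith

theorem integral_exp_div_one_add_exp_le {Ω : Type*} [MeasurableSpace Ω] {μ : Measure Ω}
    {f g : Ω → ℝ} (hfg : ∀ ω, f ω ≤ g ω) (hg : Integrable (fun ω => exp (g ω)) μ) :
    ∫ ω, exp (f ω) / (1 + exp (f ω)) ∂μ ≤ ∫ ω, exp (g ω) ∂μ :=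
  integral_mono_of_nonneg (ae_of_all _ fun ω => by positivity) hg
    (ae_of_all _ fun ω => (exp_div_one_add_exp_le_exp _).trans (exp_le_exp.2 (hfg ω)))

theorem expected_inclusion_weight_bound_general
    {Ω : Type*} [MeasureSpace Ω]
    (Z : Ω → ℝ)
    (σ γ α lam t c : ℝ) (hγ : 0 < γ) (hα : 0 < α)
    (hlam0 : 0 < lam) (hlam1 : lam < 1) (hαt : α ≤ 2 * t)
    (hint : Integrable (fun ω => Real.exp (t * (Z ω / σ) ^ 2)) ℙ)
    (hmgf : ∫ ω, Real.exp (t * (Z ω / σ) ^ 2) ∂ℙ ≤ c) :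
    ∫ ω,
        (Real.exp (Real.log (lam / (1 - lam)) + (1 / 2) * Real.log (γ / (α + γ)) +
            (α / (2 * σ ^ 2)) * (Z ω) ^ 2) /
          (1 + Real.exp (Real.log (lam / (1 - lam)) + (1 / 2) * Real.log (γ / (α + γ)) +
            (α / (2 * σ ^ 2)) * (Z ω) ^ 2))) ∂ℙ ≤
      c * (lam / (1 - lam)) * Real.sqrt (γ / (α + γ)) := by
  have hodds : 0 < lam / (1 - lam) := div_pos hlam0 (by linarith)
  have hratio : 0 < γ / (α + γ) := div_pos hγ (by linarith)
  have hdominant : (fun ω => exp (log (lam / (1 - lam)) + (1 / 2) * log (γ / (α + γ)) +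
      t * (Z ω / σ) ^ 2)) =
      fun ω => lam / (1 - lam) * √(γ / (α + γ)) * exp (t * (Z ω / σ) ^ 2) := by
    funext ω
    exact exp_log_add_half_mul_log_add hodds hratio _
  calc _ ≤ ∫ ω, exp (log (lam / (1 - lam)) + (1 / 2) * log (γ / (α + γ)) +
          t * (Z ω / σ) ^ 2) ∂ℙ :=
        integral_exp_div_one_add_exp_le
          (fun ω => add_le_add_right (div_two_mul_sq_mul_sq_le hαt σ (Z ω)) _)
          (hdominant ▸ hint.const_mul _)
    _ = lam / (1 - lam) * √(γ / (α + γ)) * ∫ ω, exp (t * (Z ω / σ) ^ 2) ∂ℙ := by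
        rw [hdominant, integral_const_mul]
    _ ≤ lam / (1 - lam) * √(γ / (α + γ)) * c := by gcongr
    _ = c * (lam / (1 - lam)) * √(γ / (α + γ)) := by ring

theorem expected_inclusion_weight_bound
    {Ω : Type*} [MeasureSpace Ω] [IsProbabilityMeasure (ℙ : Measure Ω)]
    (Z : Ω → ℝ) (hZ : Measurable Z)
    (σ γ α lam t c : ℝ) (hσ : 0 < σ) (hγ : 0 < γ) (hα : 0 < α)
    (hlam0 : 0 < lam) (hlam1 : lam < 1) (ht : 0 < t) (hαt : α ≤ 2 * t) (hc : 1 ≤ c)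
    (hint : Integrable (fun ω => Real.exp (t * (Z ω / σ) ^ 2)) ℙ)
    (hint2 : Integrable (fun ω => Real.exp ((α / 2) * (Z ω / σ) ^ 2)) ℙ)
    (hmgf : ∫ ω, Real.exp (t * (Z ω / σ) ^ 2) ∂ℙ ≤ c) :
    ∫ ω,
        (Real.exp (Real.log (lam / (1 - lam)) + (1 / 2) * Real.log (γ / (α + γ)) +
            (α / (2 * σ ^ 2)) * (Z ω) ^ 2) /
          (1 + Real.exp (Real.log (lam / (1 - lam)) + (1 / 2) * Real.log (γ / (α + γ)) +
            (α / (2 * σ ^ 2)) * (Z ω) ^ 2))) ∂ℙ ≤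
      c * (lam / (1 - lam)) * Real.sqrt (γ / (α + γ)) :=
  expected_inclusion_weight_bound_general Z σ γ α lam t c hγ hα hlam0 hlam1 hαt hint hmgf
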